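/- Let P be a finite poset and let A_1, …, A_k be distinct nonempty antichains of P such that conv(χ_∅, χ_{A_1}, …, χ_{A_k}) is a simplex face of the chain polytope C(P) containing the origin. Then each A_i is a singleton {p_i}, and the elements p_1, …, p_k form a chain in P. -/

import Mathlib

open Set

variable {E : Type*} [AddCommGroup E] [Module ℝ E]

/-- A polytope: the convex hull of a finite set of points. -/
def IsPolytope (P : Set E) : Prop := ∃ S : Finset E, P = convexHull ℝ (S : Set E)

open Classical in
/-- Dimension of a polytope: `-1` for the empty set, else the dimension of its affine span. -/
noncomputable def polyDim (P : Set E) : ℤ :=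
  if P = ∅ then -1 else (Module.finrank ℝ (vectorSpan ℝ P) : ℤ)

/-- Number of vertices (extreme points). -/
noncomputable def vertexCount (P : Set E) : ℕ := (P.extremePoints ℝ).ncard

/-- A simplex: a polytope with `dim + 1` vertices (the empty set counts as a simplex). -/
def IsSimplex (P : Set E) : Prop :=
  IsPolytope P ∧ (vertexCount P : ℤ) = polyDim P + 1

/-- Faces of a polytope are its extreme subsets. -/
def IsFaceOf (F P : Set E) : Prop := IsExtreme ℝ P F

/-- Number of `k`-dimensional simplex faces of `P`. -/
noncomputable def simpCount (P : Set E) (k : ℤ) : ℕ :=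
  {F : Set E | IsFaceOf F P ∧ IsSimplex F ∧ polyDim F = k}.ncard

/-- Number of `k`-dimensional simplex faces of `P` containing the origin. -/
noncomputable def simpCount0 (P : Set E) (k : ℤ) : ℕ :=
  {F : Set E | IsFaceOf F P ∧ IsSimplex F ∧ polyDim F = k ∧ (0 : E) ∈ F}.ncard

/-- Number of `k`-dimensional simplex faces of `P` not containing the origin. -/
noncomputable def simpCount1 (P : Set E) (k : ℤ) : ℕ :=
  {F : Set E | IsFaceOf F P ∧ IsSimplex F ∧ polyDim F = k ∧ (0 : E) ∉ F}.ncard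

/-- The order polytope of a poset. -/
def orderPolytope (α : Type*) [PartialOrder α] : Set (α → ℝ) :=
  {x | (∀ p, 0 ≤ x p ∧ x p ≤ 1) ∧ ∀ p q : α, p ≤ q → x p ≤ x q}

/-- The chain polytope of a poset. -/
def chainPolytope (α : Type*) [PartialOrder α] : Set (α → ℝ) :=
  {x | (∀ p, 0 ≤ x p) ∧ ∀ s : Finset α, IsChain (· ≤ ·) (s : Set α) → ∑ p ∈ s, x p ≤ 1}

open Classical in
/-- Characteristic vector of a subset. -/
noncomputable def chi {α : Type*} (S : Set α) : α → ℝ := fun p => if p ∈ S then 1 else 0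

/-!
If `χ_B + χ_C = x + y` with `B, C` antichains and `x, y` in a face `F` of `C(P)`, the common
midpoint lies in `F`, so `χ_B ∈ F`; being a 0/1 vector, `χ_B` is a vertex of `C(P)`, hence of `F`.
For `F = conv(0, χ_{A_1}, …, χ_{A_k})` this forces `B ∈ {∅, A_1, …, A_k}`, and since `F` is a
simplex the `χ_{A_i}` are linearly independent. Splitting `A_i = {a} ∪ (A_i \ {a})` would write
`χ_{A_i}` as a sum of two other `χ_{A_j}`, and two incomparable `p_i, p_j` would make `{p_i, p_j}`
one of the `A_m`.
-/

open Function

section Convexity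

variable {𝕜 V : Type*} [Field 𝕜] [LinearOrder 𝕜] [IsStrictOrderedRing 𝕜]
  [AddCommGroup V] [Module 𝕜 V]

theorem IsExtreme.left_mem_of_add_eq_add {A B : Set V} (hAB : IsExtreme 𝕜 A B)
    (hB : Convex 𝕜 B) {u v x y : V} (hu : u ∈ A) (hv : v ∈ A) (hx : x ∈ B) (hy : y ∈ B)
    (h : u + v = x + y) : u ∈ B := by
  have half : (0 : 𝕜) < 1 / 2 := by norm_num
  refine hAB.left_mem_of_mem_openSegment hu hv (hB hx hy half.le half.le (add_halves 1))
    ⟨1 / 2, 1 / 2, half, half, add_halves 1, ?_⟩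
  rw [← smul_add, h, smul_add]

end Convexity

theorem LinearIndependent.ne_add {R M ι : Type*} [Ring R] [Nontrivial R] [AddCommGroup M]
    [Module R M] {b : ι → M} (hb : LinearIndependent R b) {i j m : ι} (hij : i ≠ j)
    (him : i ≠ m) : b i ≠ b j + b m := fun h =>
  hb.notMem_span_image (s := {j, m}) (x := i) (by simp [hij, him]) <| h ▸
    add_mem (Submodule.subset_span (mem_image_of_mem b (by simp)))
      (Submodule.subset_span (mem_image_of_mem b (by simp)))

theorem vectorSpan_insert_zero {k V : Type*} [Ring k] [AddCommGroup V] [Module k V]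
    (s : Set V) : vectorSpan k (insert 0 s) = Submodule.span k s := by
  rw [vectorSpan_eq_span_vsub_set_right k (mem_insert 0 s)]
  simp only [vsub_eq_sub, sub_zero, image_id', Submodule.span_insert_zero]

theorem polyDim_convexHull_insert_zero {ι : Type*} (b : ι → E) :
    polyDim (convexHull ℝ (insert 0 (range b))) =
      Module.finrank ℝ (Submodule.span ℝ (range b)) := by
  rw [polyDim, if_neg (convexHull_nonempty_iff.2 (insert_nonempty _ _)).ne_empty,
    ← direction_affineSpan, affineSpan_convexHull, direction_affineSpan,
    vectorSpan_insert_zero]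

theorem linearIndependent_of_isSimplex_convexHull_insert_zero {ι : Type*} [Fintype ι]
    {b : ι → E} (hb : Injective b) (h0 : 0 ∉ range b)
    (hvert : insert 0 (range b) ⊆ (convexHull ℝ (insert 0 (range b))).extremePoints ℝ)
    (hsimp : IsSimplex (convexHull ℝ (insert 0 (range b)))) : LinearIndependent ℝ b := by
  have hcount : vertexCount (convexHull ℝ (insert 0 (range b))) = Fintype.card ι + 1 := by
    rw [vertexCount, extremePoints_convexHull_subset.antisymm hvert,
      ncard_insert_of_notMem h0, ncard_range_of_injective hb, Nat.card_eq_fintype_card]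
  have hdim := hsimp.2
  rw [hcount, polyDim_convexHull_insert_zero] at hdim
  exact linearIndependent_iff_card_eq_finrank_span.2 (by rw [Set.finrank]; omega)

section ChainPolytope

variable {α : Type*}

theorem chi_empty : chi (∅ : Set α) = 0 := by
  ext p
  simp [chi]

theorem chi_ne_zero {S : Set α} (hS : S.Nonempty) : chi S ≠ 0 := fun h => by
  obtain ⟨p, hp⟩ := hS
  simpa [chi, hp] using congrFun h p

theorem chi_injective : Injective (chi (α := α)) := fun S T h => by
  ext p
  have := congrFun h p
  by_cases hS : p ∈ S <;> by_cases hT : p ∈ T <;> simp_all [chi]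

theorem chi_union {S T : Set α} (hST : Disjoint S T) : chi (S ∪ T) = chi S + chi T := by
  ext p
  by_cases hS : p ∈ S <;> by_cases hT : p ∈ T
  · exact absurd hT (hST.notMem_of_mem_left hS)
  all_goals simp [chi, hS, hT]

variable [PartialOrder α]

theorem chainPolytope_subset_pi_Icc : chainPolytope α ⊆ univ.pi fun _ => Icc 0 1 :=
  fun x hx p _ => ⟨hx.1 p, by simpa using hx.2 {p} (by simp)⟩

theorem chi_mem_chainPolytope {S : Set α} (hS : IsAntichain (· ≤ ·) S) :
    chi S ∈ chainPolytope α := by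
  classical
  refine ⟨fun p => by by_cases hp : p ∈ S <;> simp [chi, hp], fun s hs => ?_⟩
  have hsub := inter_subsingleton_of_isChain_of_isAntichain hs hS
  simp only [chi, Finset.sum_boole, Nat.cast_le_one]
  exact Finset.card_le_one.2 fun a ha b hb =>
    hsub ⟨by simpa using (Finset.mem_filter.1 ha).1, (Finset.mem_filter.1 ha).2⟩
      ⟨by simpa using (Finset.mem_filter.1 hb).1, (Finset.mem_filter.1 hb).2⟩

theorem chi_mem_extremePoints_chainPolytope {S : Set α} (hS : IsAntichain (· ≤ ·) S) :
    chi S ∈ (chainPolytope α).extremePoints ℝ := by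
  refine inter_extremePoints_subset_extremePoints_of_subset chainPolytope_subset_pi_Icc
    ⟨chi_mem_chainPolytope hS, ?_⟩
  rw [extremePoints_pi]
  intro p _
  by_cases hp : p ∈ S <;> simp [chi, hp]

theorem mem_of_chi_add_chi_eq {𝒜 : Set (Set α)}
    (hface : IsFaceOf (convexHull ℝ (chi '' 𝒜)) (chainPolytope α)) {B C X Y : Set α}
    (hB : IsAntichain (· ≤ ·) B) (hC : IsAntichain (· ≤ ·) C) (hX : X ∈ 𝒜) (hY : Y ∈ 𝒜)
    (h : chi B + chi C = chi X + chi Y) : B ∈ 𝒜 := by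
  have hBF : chi B ∈ convexHull ℝ (chi '' 𝒜) :=
    hface.left_mem_of_add_eq_add (convex_convexHull ℝ _) (chi_mem_chainPolytope hB)
      (chi_mem_chainPolytope hC) (subset_convexHull ℝ _ (mem_image_of_mem chi hX))
      (subset_convexHull ℝ _ (mem_image_of_mem chi hY)) h
  have hBvert : chi B ∈ chi '' 𝒜 := extremePoints_convexHull_subset <|
    inter_extremePoints_subset_extremePoints_of_subset hface.subset
      ⟨hBF, chi_mem_extremePoints_chainPolytope hB⟩
  exact chi_injective.mem_set_image.1 hBvert

theorem mem_range_of_chi_add_chi_eq {ι : Type*} {A : ι → Set α}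
    (hface : IsFaceOf (convexHull ℝ (chi '' insert ∅ (range A))) (chainPolytope α))
    {B C X Y : Set α} (hB : IsAntichain (· ≤ ·) B) (hB₀ : B.Nonempty) (hC : IsAntichain (· ≤ ·) C)
    (hX : X ∈ insert ∅ (range A)) (hY : Y ∈ insert ∅ (range A))
    (h : chi B + chi C = chi X + chi Y) : B ∈ range A :=
  (mem_insert_iff.1 (mem_of_chi_add_chi_eq hface hB hC hX hY h)).resolve_left hB₀.ne_empty

theorem image_chi_subset_extremePoints {𝒜 : Set (Set α)}
    (h𝒜 : ∀ B ∈ 𝒜, IsAntichain (· ≤ ·) B) (hsub : convexHull ℝ (chi '' 𝒜) ⊆ chainPolytope α) :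
    chi '' 𝒜 ⊆ (convexHull ℝ (chi '' 𝒜)).extremePoints ℝ := by
  rintro _ ⟨B, hB, rfl⟩
  exact inter_extremePoints_subset_extremePoints_of_subset hsub
    ⟨subset_convexHull ℝ _ (mem_image_of_mem chi hB),
      chi_mem_extremePoints_chainPolytope (h𝒜 B hB)⟩

theorem exists_eq_singleton_of_isFaceOf {ι : Type*} {A : ι → Set α}
    (hA : ∀ i, IsAntichain (· ≤ ·) (A i)) (hne : ∀ i, (A i).Nonempty)
    (hface : IsFaceOf (convexHull ℝ (chi '' insert ∅ (range A))) (chainPolytope α))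
    (hli : LinearIndependent ℝ fun i => chi (A i)) (i : ι) : ∃ a, A i = {a} := by
  obtain ⟨a, ha⟩ := hne i
  refine ⟨a, by_contra fun hAi => ?_⟩
  have hrest : (A i \ {a}).Nonempty :=
    sdiff_nonempty.2 fun h => hAi ((Nonempty.subset_singleton_iff ⟨a, ha⟩).1 h)
  have hsplit : chi {a} + chi (A i \ {a}) = chi (A i) + chi ∅ := by
    rw [chi_empty, add_zero, ← chi_union disjoint_sdiff_right,
      union_sdiff_cancel (singleton_subset_iff.2 ha)]
  have hAi_mem : A i ∈ insert ∅ (range A) := mem_insert_of_mem _ (mem_range_self i)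
  have hhead := (hA i).subset (singleton_subset_iff.2 ha)
  have htail := (hA i).subset (sdiff_subset (t := {a}))
  obtain ⟨j, hj⟩ := mem_range_of_chi_add_chi_eq hface hhead (singleton_nonempty a) htail hAi_mem
    (mem_insert _ _) hsplit
  obtain ⟨m, hm⟩ := mem_range_of_chi_add_chi_eq hface htail hrest hhead hAi_mem
    (mem_insert _ _) ((add_comm _ _).trans hsplit)
  refine hli.ne_add (i := i) (j := j) (m := m) ?_ ?_ ?_
  · rintro rfl
    exact hAi hj
  · rintro rfl
    exact (hm ▸ ha).2 rfl
  · simp only [hj, hm, hsplit, chi_empty, add_zero]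

theorem isChain_range_of_isFaceOf {ι : Type*} {p : ι → α}
    (hface : IsFaceOf (convexHull ℝ (chi '' insert ∅ (range fun i => {p i})))
      (chainPolytope α)) :
    IsChain (· ≤ ·) (range p) := by
  rintro _ ⟨i, rfl⟩ _ ⟨j, rfl⟩ hij
  by_contra hincomp
  push Not at hincomp
  have hanti : IsAntichain (· ≤ ·) {p i, p j} :=
    IsAntichain.singleton.insert (by simpa using fun _ => hincomp.2)
      (by simpa using fun _ => hincomp.1)
  have hsplit : chi {p i, p j} + chi ∅ = chi {p i} + chi {p j} := by
    rw [chi_empty, add_zero, insert_eq, chi_union (disjoint_singleton.2 hij)]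
  obtain ⟨m, hm⟩ := mem_range_of_chi_add_chi_eq hface hanti (insert_nonempty _ _)
    IsAntichain.empty (mem_insert_of_mem _ (mem_range_self i))
    (mem_insert_of_mem _ (mem_range_self j)) hsplit
  have hsub : {p i, p j} ⊆ ({p m} : Set α) := hm.ge
  exact hij ((hsub (mem_insert _ _)).trans (hsub (mem_insert_of_mem _ rfl)).symm)

end ChainPolytope

theorem chain_simplex_face_structure_general (α : Type*) [PartialOrder α] (k : ℕ)
    (A : Fin k → Set α) (hA : ∀ i, IsAntichain (· ≤ ·) (A i)) (hne : ∀ i, (A i).Nonempty)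
    (hinj : Function.Injective A)
    (hface : IsFaceOf (convexHull ℝ (insert (0 : α → ℝ) (Set.range fun i => chi (A i))))
      (chainPolytope α))
    (hsimp : IsSimplex (convexHull ℝ (insert (0 : α → ℝ) (Set.range fun i => chi (A i))))) :
    ∃ p : Fin k → α, (∀ i, A i = {p i}) ∧ IsChain (· ≤ ·) (Set.range p) := by
  have hvert : chi '' insert ∅ (range A) = insert 0 (range fun i => chi (A i)) := by
    rw [image_insert_eq, chi_empty, ← range_comp]
    rfl
  rw [← hvert] at hface
  have hli : LinearIndependent ℝ fun i => chi (A i) := by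
    refine linearIndependent_of_isSimplex_convexHull_insert_zero (chi_injective.comp hinj)
      (fun ⟨i, hi⟩ => chi_ne_zero (hne i) hi) ?_ hsimp
    rw [← hvert]
    refine image_chi_subset_extremePoints ?_ hface.subset
    rintro B (rfl | ⟨i, rfl⟩)
    exacts [IsAntichain.empty, hA i]
  choose p hp using exists_eq_singleton_of_isFaceOf hA hne hface hli
  refine ⟨p, hp, isChain_range_of_isFaceOf ?_⟩
  rwa [← funext hp]

/-- origin-containing simplex faces of the chain polytope come from chains
of singleton antichains. -/
theorem chain_simplex_face_structure (α : Type*) [Fintype α] [PartialOrder α] (k : ℕ)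
    (A : Fin k → Set α) (hA : ∀ i, IsAntichain (· ≤ ·) (A i)) (hne : ∀ i, (A i).Nonempty)
    (hinj : Function.Injective A)
    (hface : IsFaceOf (convexHull ℝ (insert (0 : α → ℝ) (Set.range fun i => chi (A i))))
      (chainPolytope α))
    (hsimp : IsSimplex (convexHull ℝ (insert (0 : α → ℝ) (Set.range fun i => chi (A i))))) :
    ∃ p : Fin k → α, (∀ i, A i = {p i}) ∧ IsChain (· ≤ ·) (Set.range p) :=
  chain_simplex_face_structure_general α k A hA hne hinj hface hsimp
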